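/- Let T ⊆ 2^{<ℕ} be a tree such that μ([T]) ≥ 2^{-k}, where μ is the uniform measure on Cantor space. For a finite set H, let Γ⁰_H = {τ : τ(s) = 0 for all s ∈ H with s < |τ|}. Suppose μ([T] ∩ [Γ⁰_H]) ≥ 2^{-k}, and let s be such that the density of level-s nodes of T ∩ Γ⁰_H exceeds μ([T ∩ Γ⁰_H]) by less than ε = 2^{-k-1} − 2^{-2k} − 2^{-4k}. Then every n > s satisfies μ([T] ∩ [Γ⁰_{H∪{n}}]) ≥ 2^{-2k} + 2^{-4k}. -/
import Mathlib


open Classical Filter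

noncomputable section


/-- The number of strings of length `s` in `T`. -/
def lvlCard (T : Set (List Bool)) (s : ℕ) : ℕ :=
  {σ ∈ T | σ.length = s}.ncard

/-- The measure of the set of paths of a tree `T ⊆ 2^{<ℕ}` under the uniform
measure on Cantor space. -/
def treeMeasure (T : Set (List Bool)) : ℝ :=
  ⨅ s : ℕ, (lvlCard T s : ℝ) / 2 ^ s

/-- The tree of strings vanishing on `H`. -/
def Gam0 (H : Finset ℕ) : Set (List Bool) :=
  {τ | ∀ a ∈ H, a < τ.length → τ.getD a true = false}

lemma finite_len (m : ℕ) : {l : List Bool | l.length = m}.Finite :=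
  List.finite_length_eq Bool m

lemma finite_lvl (T : Set (List Bool)) (s : ℕ) : {σ ∈ T | σ.length = s}.Finite :=
  (finite_len s).subset (fun _ h => h.2)

lemma ncard_len (m : ℕ) : {l : List Bool | l.length = m}.ncard = 2 ^ m := by
  induction m with
  | zero =>
    have : {l : List Bool | l.length = 0} = {([] : List Bool)} := by
      ext l; simp [List.length_eq_zero_iff]
    rw [this]; simp
  | succ m ih =>
    have h : {l : List Bool | l.length = m + 1}
        = (List.cons true) '' {l | l.length = m} ∪ (List.cons false) '' {l | l.length = m} := by
      ext l
      constructor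
      · intro hl
        match l, hl with
        | b :: t, hl =>
          cases b
          · exact Or.inr ⟨t, by simpa using hl, rfl⟩
          · exact Or.inl ⟨t, by simpa using hl, rfl⟩
      · rintro (⟨t, ht, rfl⟩ | ⟨t, ht, rfl⟩) <;> simpa using ht
    have hdisj : Disjoint ((List.cons true) '' {l : List Bool | l.length = m})
        ((List.cons false) '' {l : List Bool | l.length = m}) := by
      rw [Set.disjoint_left]
      rintro x ⟨t, _, rfl⟩ ⟨u, _, h⟩
      simp at h
    rw [h, Set.ncard_union_eq hdisj ((finite_len m).image _) ((finite_len m).image _),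
      Set.ncard_image_of_injective _ (List.cons_injective),
      Set.ncard_image_of_injective _ (List.cons_injective), ih]
    ring

lemma ncard_prod {α β : Type*} (s : Set α) (t : Set β) :
    (s ×ˢ t).ncard = s.ncard * t.ncard := by
  rw [← Nat.card_coe_set_eq, ← Nat.card_coe_set_eq, ← Nat.card_coe_set_eq,
    Nat.card_congr (Equiv.Set.prod s t), Nat.card_prod]

lemma ncard_len_getD (m j : ℕ) (hj : j < m) :
    {l : List Bool | l.length = m ∧ l.getD j true = true}.ncard ≤ 2 ^ (m - 1) := by
  rw [← ncard_len (m - 1)]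
  refine Set.ncard_le_ncard_of_injOn (fun l => l.eraseIdx j) ?_ ?_ (finite_len _)
  · intro l hl
    simp only [Set.mem_setOf_eq]
    rw [List.length_eraseIdx]
    simp [hl.1, hj]
  · have recon : ∀ l : List Bool, l.length = m → l.getD j true = true →
        l = l.take j ++ true :: l.drop (j + 1) := by
      intro l hl hg
      have hjl : j < l.length := by omega
      conv_lhs => rw [← List.take_append_drop j l]
      rw [List.drop_eq_getElem_cons hjl]
      rw [List.getD_eq_getElem _ _ hjl] at hg
      rw [hg]
    rintro l1 ⟨hl1, hg1⟩ l2 ⟨hl2, hg2⟩ he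
    simp only [List.eraseIdx_eq_take_drop_succ] at he
    have hlen : (l1.take j).length = (l2.take j).length := by
      rw [List.length_take, List.length_take]; omega
    obtain ⟨e1, e2⟩ := List.append_inj he hlen
    rw [recon l1 hl1 hg1, recon l2 hl2 hg2, e1, e2]

lemma treeMeasure_le (T : Set (List Bool)) (t : ℕ) :
    treeMeasure T ≤ (lvlCard T t : ℝ) / 2 ^ t := by
  apply ciInf_le
  refine ⟨0, ?_⟩
  rintro x ⟨i, rfl⟩
  positivity

lemma count_true_le (A : Set (List Bool))
    (hA : ∀ σ τ : List Bool, σ <+: τ → τ ∈ A → σ ∈ A)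
    (s n t : ℕ) (hsn : s ≤ n) (hnt : n < t) :
    {σ | σ ∈ A ∧ σ.length = t ∧ σ.getD n true = true}.ncard
      ≤ lvlCard A s * 2 ^ (t - s - 1) := by
  have hR : {ρ : List Bool | ρ.length = t - s ∧ ρ.getD (n - s) true = true}.ncard
      ≤ 2 ^ (t - s - 1) := ncard_len_getD (t - s) (n - s) (by omega)
  calc {σ | σ ∈ A ∧ σ.length = t ∧ σ.getD n true = true}.ncard
      ≤ ({σ ∈ A | σ.length = s} ×ˢ
          {ρ : List Bool | ρ.length = t - s ∧ ρ.getD (n - s) true = true}).ncard := by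
        refine Set.ncard_le_ncard_of_injOn (fun σ => (σ.take s, σ.drop s)) ?_ ?_
          ((finite_lvl A s).prod ((finite_len (t - s)).subset (fun _ h => h.1)))
        · rintro σ ⟨hσA, hσl, hσg⟩
          refine ⟨⟨hA _ _ (List.take_prefix s σ) hσA, ?_⟩, ?_, ?_⟩
          · rw [List.length_take]; omega
          · rw [List.length_drop]; omega
          · have hn : n < σ.length := by omega
            have hd : n - s < (σ.drop s).length := by rw [List.length_drop]; omega
            rw [List.getD_eq_getElem _ _ hd, List.getElem_drop]
            rw [List.getD_eq_getElem _ _ hn] at hσg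
            simpa [show s + (n - s) = n from by omega] using hσg
        · rintro σ1 - σ2 - he
          have h1 : σ1.take s = σ2.take s := congrArg Prod.fst he
          have h2 : σ1.drop s = σ2.drop s := congrArg Prod.snd he
          rw [← List.take_append_drop s σ1, ← List.take_append_drop s σ2, h1, h2]
    _ = lvlCard A s
        * {ρ : List Bool | ρ.length = t - s ∧ ρ.getD (n - s) true = true}.ncard :=
        ncard_prod _ _
    _ ≤ lvlCard A s * 2 ^ (t - s - 1) := Nat.mul_le_mul_left _ hR
/-- Extending the homogeneity set: if `T ∩ Γ⁰_H` has measure at least `2^{-k}`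
and level `s` approximates this measure within
`ε = 2^{-k-1} - 2^{-2k} - 2^{-4k}`, then for every `n > s` the tree
`T ∩ Γ⁰_{H ∪ {n}}` has measure at least `2^{-2k} + 2^{-4k}`. -/
theorem stmt14 (T : Set (List Bool))
    (htree : ∀ σ τ : List Bool, σ <+: τ → τ ∈ T → σ ∈ T)
    (k : ℕ) (hTk : (1 / 2 ^ k : ℝ) ≤ treeMeasure T)
    (H : Finset ℕ) (s : ℕ)
    (hbig : (1 / 2 ^ k : ℝ) ≤ treeMeasure (T ∩ Gam0 H))
    (happrox : (lvlCard (T ∩ Gam0 H) s : ℝ) / 2 ^ s - treeMeasure (T ∩ Gam0 H)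
      < 1 / 2 ^ (k + 1) - 1 / 2 ^ (2 * k) - 1 / 2 ^ (4 * k)) :
    ∀ n : ℕ, s < n →
      (1 / 2 ^ (2 * k) + 1 / 2 ^ (4 * k) : ℝ)
        ≤ treeMeasure (T ∩ Gam0 (insert n H)) := by
  intro n hn
  set A := T ∩ Gam0 H with hAdef
  set A' := T ∩ Gam0 (insert n H) with hA'def
  have hAtree : ∀ σ τ : List Bool, σ <+: τ → τ ∈ A → σ ∈ A := by
    rintro σ τ hpre ⟨hT, hG⟩
    refine ⟨htree σ τ hpre hT, fun a ha hlt => ?_⟩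
    obtain ⟨r, rfl⟩ := hpre
    have := hG a ha (by rw [List.length_append]; omega)
    rwa [List.getD_append _ _ _ _ hlt] at this
  set m := treeMeasure A with hmdef
  have hm : (1 / 2 ^ k : ℝ) ≤ m := hbig
  have h0 : (0 : ℝ) ≤ (lvlCard A s : ℝ) / 2 ^ s - m :=
    sub_nonneg.mpr (treeMeasure_le A s)
  have hε : (0 : ℝ) < 1 / 2 ^ (k + 1) - 1 / 2 ^ (2 * k) - 1 / 2 ^ (4 * k) :=
    lt_of_le_of_lt h0 happrox
  have hkpow : (1 : ℝ) / 2 ^ (k + 1) = (1 / 2 ^ k) / 2 := by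
    rw [pow_succ]; ring
  have hk0 : (0 : ℝ) < 1 / 2 ^ k := by positivity
  unfold treeMeasure
  refine le_ciInf fun t => ?_
  rcases le_or_gt t n with htn | htn
  · -- easy case: levels up to n are unchanged
    have hsetEq : {σ ∈ A' | σ.length = t} = {σ ∈ A | σ.length = t} := by
      ext σ
      simp only [hA'def, hAdef, Set.mem_setOf_eq, Set.mem_inter_iff, Gam0,
        Finset.mem_insert]
      constructor
      · rintro ⟨⟨hT, hG⟩, hlen⟩
        exact ⟨⟨hT, fun a ha => hG a (Or.inr ha)⟩, hlen⟩
      · rintro ⟨⟨hT, hG⟩, hlen⟩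
        refine ⟨⟨hT, fun a ha hlt => ?_⟩, hlen⟩
        rcases ha with rfl | ha
        · omega
        · exact hG a ha hlt
    have hcards : lvlCard A' t = lvlCard A t := by
      unfold lvlCard; rw [hsetEq]
    have hml := treeMeasure_le A t
    rw [hcards]
    linarith [hml]
  · -- main case: t > n
    set E := {σ | σ ∈ A ∧ σ.length = t ∧ σ.getD n true = true} with hEdef
    have hsetEq : {σ ∈ A | σ.length = t} = {σ ∈ A' | σ.length = t} ∪ E := by
      ext σ
      simp only [hA'def, hAdef, hEdef, Set.mem_setOf_eq, Set.mem_union,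
        Set.mem_inter_iff, Gam0, Finset.mem_insert]
      constructor
      · rintro ⟨⟨hT, hG⟩, hlen⟩
        rcases Bool.eq_false_or_eq_true (σ.getD n true) with hb | hb
        · exact Or.inr ⟨⟨hT, hG⟩, hlen, hb⟩
        · refine Or.inl ⟨⟨hT, fun a ha hlt => ?_⟩, hlen⟩
          rcases ha with rfl | ha
          · exact hb
          · exact hG a ha hlt
      · rintro (⟨⟨hT, hG⟩, hlen⟩ | ⟨⟨hT, hG⟩, hlen, _⟩)
        · exact ⟨⟨hT, fun a ha => hG a (Or.inr ha)⟩, hlen⟩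
        · exact ⟨⟨hT, hG⟩, hlen⟩
    have hdisj : Disjoint {σ ∈ A' | σ.length = t} E := by
      rw [Set.disjoint_left]
      rintro σ ⟨⟨hT, hG⟩, hlen⟩ ⟨_, _, hg⟩
      have := hG n (Finset.mem_insert_self n H) (by omega)
      rw [this] at hg
      exact Bool.false_ne_true hg
    have hEfin : E.Finite := (finite_len t).subset (fun σ h => h.2.1)
    have hsum : lvlCard A t = lvlCard A' t + E.ncard := by
      unfold lvlCard
      rw [hsetEq, Set.ncard_union_eq hdisj (finite_lvl A' t) hEfin]
    have hcount : E.ncard ≤ lvlCard A s * 2 ^ (t - s - 1) :=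
      count_true_le A hAtree s n t (le_of_lt hn) htn
    have hlvls : (lvlCard A s : ℝ)
        < (m + (1 / 2 ^ (k + 1) - 1 / 2 ^ (2 * k) - 1 / 2 ^ (4 * k))) * 2 ^ s := by
      rw [← div_lt_iff₀ (by positivity : (0:ℝ) < 2 ^ s)]
      linarith [happrox]
    have hAt : m * 2 ^ t ≤ (lvlCard A t : ℝ) := by
      have := treeMeasure_le A t
      rw [le_div_iff₀ (by positivity : (0:ℝ) < 2 ^ t)] at this
      exact this
    have h2a : (2 : ℝ) ^ s * 2 ^ (t - s - 1) = 2 ^ (t - 1) := by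
      rw [← pow_add]; congr 1; omega
    have h2b : (2 : ℝ) ^ t = 2 * 2 ^ (t - 1) := by
      rw [← pow_succ']; congr 1; omega
    have hEr : (E.ncard : ℝ)
        ≤ (m + (1 / 2 ^ (k + 1) - 1 / 2 ^ (2 * k) - 1 / 2 ^ (4 * k))) * 2 ^ (t - 1) := by
      calc (E.ncard : ℝ) ≤ (lvlCard A s : ℝ) * 2 ^ (t - s - 1) := by
            exact_mod_cast Nat.cast_le.mpr hcount
        _ ≤ ((m + (1 / 2 ^ (k + 1) - 1 / 2 ^ (2 * k) - 1 / 2 ^ (4 * k))) * 2 ^ s)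
              * 2 ^ (t - s - 1) :=
            mul_le_mul_of_nonneg_right (le_of_lt hlvls) (by positivity)
        _ = _ := by rw [mul_assoc, h2a]
    have hsumR : (lvlCard A t : ℝ) = (lvlCard A' t : ℝ) + (E.ncard : ℝ) := by
      exact_mod_cast congrArg (Nat.cast : ℕ → ℝ) hsum
    have hkey : 2 * ((1 : ℝ) / 2 ^ (2 * k) + 1 / 2 ^ (4 * k))
        ≤ m - (1 / 2 ^ (k + 1) - 1 / 2 ^ (2 * k) - 1 / 2 ^ (4 * k)) := by
      linarith [hm, hε, hkpow]
    have hA't : (m - (1 / 2 ^ (k + 1) - 1 / 2 ^ (2 * k) - 1 / 2 ^ (4 * k))) * 2 ^ (t - 1)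
        ≤ (lvlCard A' t : ℝ) := by
      have step : (m - (1 / 2 ^ (k + 1) - 1 / 2 ^ (2 * k) - 1 / 2 ^ (4 * k))) * 2 ^ (t - 1)
          = m * (2 * 2 ^ (t - 1))
            - (m + (1 / 2 ^ (k + 1) - 1 / 2 ^ (2 * k) - 1 / 2 ^ (4 * k))) * 2 ^ (t - 1) := by
        ring
      rw [step, ← h2b]
      linarith [hAt, hEr, hsumR]
    rw [le_div_iff₀ (by positivity : (0:ℝ) < 2 ^ t)]
    calc (1 / 2 ^ (2 * k) + 1 / 2 ^ (4 * k) : ℝ) * 2 ^ t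
        = 2 * (1 / 2 ^ (2 * k) + 1 / 2 ^ (4 * k)) * 2 ^ (t - 1) := by rw [h2b]; ring
      _ ≤ (m - (1 / 2 ^ (k + 1) - 1 / 2 ^ (2 * k) - 1 / 2 ^ (4 * k))) * 2 ^ (t - 1) :=
          mul_le_mul_of_nonneg_right hkey (by positivity)
      _ ≤ (lvlCard A' t : ℝ) := hA't
end
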